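/- The Manin symbols satisfy the relations [P,g] + [P|_{S^{-1}}, gS] = 0, [P,g] = [P|_{J^{-1}}, gJ], and [P,g] + [P|_{(TS)^{-1}}, g(TS)] + [P|_{(TS)^{-2}}, g(TS)²] = 0 in M_k(Γ), for all P ∈ R_{k−2}[X,Y] and g ∈ SL₂(𝒪), where S = (0 −1; 1 0), TS = (1 −1; 1 0), and J = (ε 0; 0 1) with ε the fundamental unit of K. -/

import Mathlib

open scoped MatrixGroups LinearAlgebra.Projectivization Classical
open Matrix MvPolynomial NumberField

set_option maxHeartbeats 1000000
set_option synthInstance.maxHeartbeats 200000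

noncomputable section

namespace Bianchi

/-- `K` is (isomorphic to) the imaginary quadratic field `ℚ(√-d)` for some
`d ∈ {1,2,3,7,11}`, i.e. a Euclidean imaginary quadratic field. -/
def IsEuclideanImagQuad (K : Type) [Field K] [NumberField K] : Prop :=
  ∃ d : ℕ, d ∈ ({1, 2, 3, 7, 11} : Set ℕ) ∧
    ∃ α : K, α ^ 2 = -(d : K) ∧ Algebra.adjoin ℚ {α} = ⊤

variable (K : Type) [Field K] [NumberField K]

/-- 2×2 matrices with entries in `A`. -/
abbrev Mat2 (A : Type*) := Matrix (Fin 2) (Fin 2) A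

/-- The map on matrices induced by the inclusion `𝓞 K → K`. -/
def ιm : Mat2 (𝓞 K) → Mat2 K := fun M => M.map (algebraMap (𝓞 K) K)

/-- The projective line `P¹(K)`, whose points are the cusps. -/
abbrev P1 := ℙ K (Fin 2 → K)

/-- Action of a nonsingular `K`-matrix on `P¹(K)` (acting on column vectors);
junk value (the identity) for singular matrices. -/
def mAct (A : Mat2 K) : P1 K → P1 K :=
  if h : Function.Injective (Matrix.toLin' A) then
    Projectivization.map (Matrix.toLin' A) h else id

/-- The cusp `0 = 0/1 = [0 : 1]`. -/
def c0 : P1 K := Projectivization.mk K ![0, 1]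
  (by intro h; have := congrFun h 1; simp at this)

/-- The cusp `∞ = 1/0 = [1 : 0]`. -/
def cInf : P1 K := Projectivization.mk K ![1, 0]
  (by intro h; have := congrFun h 0; simp at this)

variable (R : Type) [CommRing R] [Algebra (𝓞 K) R] (k : ℕ)

/-- `R_{k-2}[X,Y]`, the space of homogeneous polynomials of degree `k - 2` in two
variables `X, Y` over `R`, presented by the coefficient vectors with respect to the
monomial basis `X^i Y^(k-2-i)`, `0 ≤ i ≤ k-2`. -/
abbrev Poly := Fin (k - 1) → R

/-- The exponent function of the `i`-th basis monomial `X^i Y^(k-2-i)` of `R_{k-2}[X,Y]`. -/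
def expo (i : Fin (k - 1)) : Fin 2 →₀ ℕ :=
  Finsupp.single 0 (i : ℕ) + Finsupp.single 1 (k - 2 - (i : ℕ))

/-- Interpret a coefficient vector as the homogeneous polynomial
`∑ i, P i • X^i Y^(k-2-i)`. -/
def toPoly : Poly R k →ₗ[R] MvPolynomial (Fin 2) R :=
  ∑ i : Fin (k - 1), (monomial (expo k i)).comp (LinearMap.proj i)

/-- Extract the coefficient vector of a homogeneous polynomial of degree `k-2`. -/
def ofPoly : MvPolynomial (Fin 2) R →ₗ[R] Poly R k :=
  LinearMap.pi (fun i => lcoeff R (expo k i))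

/-- The pair of degree-one forms `(dX - bY, -cX + aY)` attached to `g = (a b; c d)`. -/
def substVec (g : Mat2 (𝓞 K)) : Fin 2 → MvPolynomial (Fin 2) R :=
  ![C (algebraMap (𝓞 K) R (g 1 1)) * X 0 - C (algebraMap (𝓞 K) R (g 0 1)) * X 1,
    -(C (algebraMap (𝓞 K) R (g 1 0)) * X 0) + C (algebraMap (𝓞 K) R (g 0 0)) * X 1]

/-- The substitution `P(X,Y) ↦ P(dX - bY, -cX + aY)` for `g = (a b; c d)`. -/
def substMat (g : Mat2 (𝓞 K)) : MvPolynomial (Fin 2) R →ₐ[R] MvPolynomial (Fin 2) R :=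
  aeval (substVec K R g)

/-- The right action `P ↦ P|_g = P(dX - bY, -cX + aY)` of a matrix `g` over `𝓞 K`
on `R_{k-2}[X,Y]` (substitution preserves homogeneity, so this is computed by
passing to polynomials, substituting, and taking coefficients again). -/
def polyAct (g : Mat2 (𝓞 K)) : Poly R k →ₗ[R] Poly R k :=
  (ofPoly R k) ∘ₗ (substMat K R g).toLinearMap ∘ₗ (toPoly R k)

/-- Evaluation `P(x₀, x₁)` of `P ∈ R_{k-2}[X,Y]` at a pair of elements of `R`. -/
def pevalR (P : Poly R k) (x : Fin 2 → R) : R := MvPolynomial.eval x (toPoly R k P)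

end Bianchi
namespace Bianchi

variable (K : Type) [Field K] [NumberField K]
variable (R : Type) [CommRing R] [Algebra (𝓞 K) R] (k : ℕ)
variable (Γ : Subgroup (SL(2, 𝓞 K)))

/-- The relations defining boundary modular symbols: `x|_γ = x` for `γ ∈ Γ`. -/
def bsRel : Submodule R (P1 K →₀ Poly R k) :=
  Submodule.span R {x | ∃ (γ : SL(2, 𝓞 K)) (_ : γ ∈ Γ) (α : P1 K) (P : Poly R k),
    x = Finsupp.single (mAct K (ιm K γ.1) α) (polyAct K R k γ.1 P) - Finsupp.single α P}

/-- The boundary modular symbols `B_k(Γ)` of weight `k` and level `Γ`. -/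
abbrev BS := (P1 K →₀ Poly R k) ⧸ bsRel K R k Γ

/-- The boundary modular symbol `P ⊗ {α}`. -/
def bsym (α : P1 K) (P : Poly R k) : BS K R k Γ :=
  Submodule.Quotient.mk (Finsupp.single α P)

/-- The free module underlying modular symbols. -/
abbrev MSfree := (P1 K × P1 K) →₀ Poly R k

/-- The relations defining modular symbols: `{α,α} = 0`,
`{α,β} + {β,γ} + {γ,α} = 0`, and `x|_γ = x` for `γ ∈ Γ`. -/
def msRel : Submodule R (MSfree K R k) :=
  Submodule.span R
    ({x | ∃ (α : P1 K) (P : Poly R k), x = Finsupp.single (α, α) P} ∪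
     {x | ∃ (α β γ : P1 K) (P : Poly R k),
        x = Finsupp.single (α, β) P + Finsupp.single (β, γ) P + Finsupp.single (γ, α) P} ∪
     {x | ∃ (γ : SL(2, 𝓞 K)) (_ : γ ∈ Γ) (α β : P1 K) (P : Poly R k),
        x = Finsupp.single (mAct K (ιm K γ.1) α, mAct K (ιm K γ.1) β) (polyAct K R k γ.1 P)
          - Finsupp.single (α, β) P})

/-- The modular symbols `M_k(Γ)` of weight `k` and level `Γ`. -/
abbrev MS := MSfree K R k ⧸ msRel K R k Γ

/-- The modular symbol `P ⊗ {α, β}`. -/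
def msym (α β : P1 K) (P : Poly R k) : MS K R k Γ :=
  Submodule.Quotient.mk (Finsupp.single (α, β) P)

/-- The boundary map on the free modules, `P ⊗ {α,β} ↦ P ⊗ {β} - P ⊗ {α}`. -/
def bdFree : MSfree K R k →ₗ[R] (P1 K →₀ Poly R k) :=
  Finsupp.lsum ℕ (fun p : P1 K × P1 K =>
    (Finsupp.lsingle p.2 - Finsupp.lsingle p.1 : Poly R k →ₗ[R] (P1 K →₀ Poly R k)))

lemma bdFree_rel : msRel K R k Γ ≤ (bsRel K R k Γ).comap (bdFree K R k) := by
  rw [msRel, Submodule.span_le]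
  rintro x ((⟨α, P, rfl⟩ | ⟨α, β, γ, P, rfl⟩) | ⟨γ, hγ, α, β, P, rfl⟩) <;>
    simp only [SetLike.mem_coe, Submodule.mem_comap, map_add, map_sub, bdFree,
      Finsupp.lsum_single, LinearMap.sub_apply, Finsupp.lsingle_apply]
  · simpa using (bsRel K R k Γ).zero_mem
  · have h0 : (Finsupp.single β P - Finsupp.single α P)
        + (Finsupp.single γ P - Finsupp.single β P)
        + (Finsupp.single α P - Finsupp.single γ P) = (0 : P1 K →₀ Poly R k) := by abel
    rw [h0]
    exact (bsRel K R k Γ).zero_mem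
  · have h1 : (Finsupp.single (mAct K (ιm K γ.1) β) (polyAct K R k γ.1 P)
        - Finsupp.single β P) ∈ bsRel K R k Γ :=
      Submodule.subset_span ⟨γ, hγ, β, P, rfl⟩
    have h2 : (Finsupp.single (mAct K (ιm K γ.1) α) (polyAct K R k γ.1 P)
        - Finsupp.single α P) ∈ bsRel K R k Γ :=
      Submodule.subset_span ⟨γ, hγ, α, P, rfl⟩
    have h3 := Submodule.sub_mem _ h1 h2
    convert h3 using 1
    abel

/-- The boundary map `∂ : M_k(Γ) → B_k(Γ)`. -/
def bd : MS K R k Γ →ₗ[R] BS K R k Γ :=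
  Submodule.mapQ _ _ (bdFree K R k) (bdFree_rel K R k Γ)

/-- The cuspidal modular symbols `𝒮_k(Γ) = ker ∂`. -/
def Scusp : Submodule R (MS K R k Γ) := LinearMap.ker (bd K R k Γ)

/-- The Manin symbol `[P, g] = P|_g ⊗ {g·0, g·∞}`, for an arbitrary matrix `g` over `𝓞`. -/
def maninSymM (P : Poly R k) (A : Mat2 (𝓞 K)) : MS K R k Γ :=
  msym K R k Γ (mAct K (ιm K A) (c0 K)) (mAct K (ιm K A) (cInf K)) (polyAct K R k A P)

end Bianchi
namespace Bianchi

section ManinRelations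

variable (K : Type) [Field K] [NumberField K]

/-- The matrix `S = (0 -1; 1 0)` of `SL₂(𝓞)`. -/
def Smat : SL(2, 𝓞 K) := ⟨!![0, -1; 1, 0], by norm_num [Matrix.det_fin_two_of]⟩

/-- The matrix `TS = (1 -1; 1 0)` of `SL₂(𝓞)`. -/
def TSmat : SL(2, 𝓞 K) := ⟨!![1, -1; 1, 0], by norm_num [Matrix.det_fin_two_of]⟩

/-- The matrix `J = (ε 0; 0 1)`, `ε` a unit of `𝓞`. -/
def Jmat (e : (𝓞 K)ˣ) : Mat2 (𝓞 K) := !![(e : 𝓞 K), 0; 0, 1]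

end ManinRelations

/-!
The polynomial parts of all three relations collapse to `P|_g`: substitution composes like
matrix multiplication and preserves homogeneity, so `(P|_{h'})|_{gh} = P|_{ghh'} = P|_g` whenever
`hh' = 1`. What remains is the action on cusps: `S` swaps `0` and `∞`, `J` fixes both, and `TS`
permutes `0 ↦ ∞ ↦ 1 ↦ 0`. The three relations thus become `{α,β} + {β,α} = 0`, a tautology,
and the three-term relation for the cusps `g·0, g·∞, g·1`.
-/

section HomogeneousPolynomials

variable (R : Type) [CommRing R] (k : ℕ)

lemma expo_apply_zero (i : Fin (k - 1)) : expo k i 0 = i := by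
  simp [expo]

lemma expo_apply_one (i : Fin (k - 1)) : expo k i 1 = k - 2 - i := by
  simp [expo]

lemma degree_fin_two (d : Fin 2 →₀ ℕ) : d.degree = d 0 + d 1 := by
  rw [Finsupp.degree_eq_sum, Fin.sum_univ_two]

lemma degree_expo (i : Fin (k - 1)) : (expo k i).degree = k - 2 := by
  rw [degree_fin_two, expo_apply_zero, expo_apply_one]
  have := i.2
  omega

lemma expo_injective : Function.Injective (expo k) := fun i j h =>
  Fin.ext (by simpa only [expo_apply_zero] using DFunLike.congr_fun h 0)

lemma exists_expo_eq (hk : 2 ≤ k) {m : Fin 2 →₀ ℕ} (hm : m.degree = k - 2) :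
    ∃ i, expo k i = m := by
  rw [degree_fin_two] at hm
  refine ⟨⟨m 0, by omega⟩, Finsupp.ext fun j => ?_⟩
  fin_cases j
  · exact expo_apply_zero k _
  · simp only [Fin.mk_one, expo_apply_one]
    omega

lemma toPoly_apply (P : Poly R k) :
    toPoly R k P = ∑ i : Fin (k - 1), monomial (expo k i) (P i) := by
  simp [toPoly]

lemma coeff_expo_toPoly (P : Poly R k) (i : Fin (k - 1)) :
    coeff (expo k i) (toPoly R k P) = P i := by
  simp [toPoly_apply, coeff_sum, coeff_monomial, (expo_injective k).eq_iff]

lemma isHomogeneous_toPoly (P : Poly R k) : (toPoly R k P).IsHomogeneous (k - 2) := by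
  rw [toPoly_apply]
  exact IsHomogeneous.sum _ _ _ fun i _ => isHomogeneous_monomial _ (degree_expo k i)

lemma toPoly_ofPoly (hk : 2 ≤ k) {Q : MvPolynomial (Fin 2) R} (hQ : Q.IsHomogeneous (k - 2)) :
    toPoly R k (ofPoly R k Q) = Q := by
  ext m
  by_cases hm : m.degree = k - 2
  · obtain ⟨i, rfl⟩ := exists_expo_eq k hk hm
    rw [coeff_expo_toPoly]
    rfl
  · rw [(isHomogeneous_toPoly R k _).coeff_eq_zero hm, hQ.coeff_eq_zero hm]

end HomogeneousPolynomials

section PolynomialAction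

variable (K : Type) [Field K] (R : Type) [CommRing R] [Algebra (𝓞 K) R] (k : ℕ)

lemma isHomogeneous_substVec (A : Mat2 (𝓞 K)) (i : Fin 2) :
    (substVec K R A i).IsHomogeneous 1 := by
  fin_cases i
  · exact (isHomogeneous_C_mul_X _ _).sub (isHomogeneous_C_mul_X _ _)
  · exact (isHomogeneous_C_mul_X _ _).neg.add (isHomogeneous_C_mul_X _ _)

lemma isHomogeneous_substMat (A : Mat2 (𝓞 K)) {Q : MvPolynomial (Fin 2) R} {n : ℕ}
    (hQ : Q.IsHomogeneous n) : (substMat K R A Q).IsHomogeneous n := by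
  simpa only [one_mul, substMat] using hQ.aeval _ (isHomogeneous_substVec K R A)

lemma substMat_comp_substMat (A B : Mat2 (𝓞 K)) :
    (substMat K R B).comp (substMat K R A) = substMat K R (B * A) := by
  rw [substMat, substMat, substMat, comp_aeval]
  congr 1
  funext i
  fin_cases i <;>
    simp only [substVec, Fin.zero_eta, Fin.mk_one, Matrix.cons_val_zero, Matrix.cons_val_one,
      map_sub, map_add, map_neg, _root_.map_mul, aeval_C, aeval_X,
      Matrix.mul_apply, Fin.sum_univ_two, algebraMap_eq] <;>
    ring

lemma polyAct_polyAct (A B : Mat2 (𝓞 K)) (P : Poly R k) :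
    polyAct K R k B (polyAct K R k A P) = polyAct K R k (B * A) P := by
  rcases Nat.lt_or_ge k 2 with hk | hk
  -- for `k < 2` the coefficient space `Fin (k - 1) → R` is zero
  · funext i
    have := i.2
    omega
  simp only [polyAct, LinearMap.comp_apply, AlgHom.toLinearMap_apply,
    toPoly_ofPoly R k hk (isHomogeneous_substMat K R A (isHomogeneous_toPoly R k P)),
    ← substMat_comp_substMat, AlgHom.comp_apply]

end PolynomialAction

lemma specialLinearGroup_coe_mul_coe_eq_one {n A : Type*} [Fintype n] [DecidableEq n]
    [CommRing A] {g h : Matrix.SpecialLinearGroup n A} (hgh : g * h = 1) :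
    (g : Matrix n n A) * h = 1 :=
  congrArg Subtype.val hgh

lemma isUnit_coe_specialLinearGroup {n A : Type*} [Fintype n] [DecidableEq n] [CommRing A]
    (g : Matrix.SpecialLinearGroup n A) : IsUnit (g : Matrix n n A) :=
  IsUnit.of_mul_eq_one _ (specialLinearGroup_coe_mul_coe_eq_one (mul_inv_cancel g))

lemma Jmat_mul_Jmat_inv {K : Type} [Field K] (e : (𝓞 K)ˣ) : Jmat K e * Jmat K e⁻¹ = 1 := by
  simp [Jmat, Matrix.one_fin_two]

section ProjectiveAction

variable {K : Type} [Field K]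

lemma mulVec_ne_zero_of_isUnit {A : Mat2 K} (hA : IsUnit A) {v : Fin 2 → K} (hv : v ≠ 0) :
    A *ᵥ v ≠ 0 :=
  fun h => hv (mulVec_injective_of_isUnit hA (h.trans (mulVec_zero A).symm))

lemma mAct_mk {A : Mat2 K} (hA : IsUnit A) {v : Fin 2 → K} (hv : v ≠ 0) :
    mAct K A (Projectivization.mk K v hv) =
      Projectivization.mk K (A *ᵥ v) (mulVec_ne_zero_of_isUnit hA hv) := by
  rw [mAct, dif_pos (show Function.Injective (toLin' A) from mulVec_injective_of_isUnit hA)]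
  rfl

lemma mAct_mk_of_mulVec_eq_smul {A : Mat2 K} (hA : IsUnit A) {v w : Fin 2 → K} (hv : v ≠ 0)
    (hw : w ≠ 0) (a : K) (h : A *ᵥ v = a • w) :
    mAct K A (Projectivization.mk K v hv) = Projectivization.mk K w hw := by
  rw [mAct_mk hA, Projectivization.mk_eq_mk_iff']
  exact ⟨a, h.symm⟩

lemma mAct_mul {A B : Mat2 K} (hA : IsUnit A) (hB : IsUnit B) (x : P1 K) :
    mAct K (A * B) x = mAct K A (mAct K B x) := by
  induction x using Projectivization.ind with
  | h v hv =>
    rw [mAct_mk hB, mAct_mk hA, mAct_mk (hA.mul hB)]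
    congr 1
    exact (mulVec_mulVec v A B).symm

lemma isUnit_ιm {M : Mat2 (𝓞 K)} (hM : IsUnit M) : IsUnit (ιm K M) :=
  hM.map (algebraMap (𝓞 K) K).mapMatrix

lemma mAct_ιm_mul {M N : Mat2 (𝓞 K)} (hM : IsUnit M) (hN : IsUnit N) (x : P1 K) :
    mAct K (ιm K (M * N)) x = mAct K (ιm K M) (mAct K (ιm K N) x) := by
  rw [ιm, Matrix.map_mul]
  exact mAct_mul (isUnit_ιm hM) (isUnit_ιm hN) x

end ProjectiveAction

section Cusps

variable (K : Type) [Field K] [NumberField K]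

def c1 : P1 K := Projectivization.mk K ![1, 1] (by intro h; simpa using congrFun h 0)

lemma mAct_S_c0 : mAct K (ιm K (Smat K).1) (c0 K) = cInf K :=
  mAct_mk_of_mulVec_eq_smul (isUnit_ιm (isUnit_coe_specialLinearGroup _)) _ _ (-1) <| by
    ext i; fin_cases i <;> simp [ιm, Smat]

lemma mAct_S_cInf : mAct K (ιm K (Smat K).1) (cInf K) = c0 K :=
  mAct_mk_of_mulVec_eq_smul (isUnit_ιm (isUnit_coe_specialLinearGroup _)) _ _ 1 <| by
    ext i; fin_cases i <;> simp [ιm, Smat]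

lemma mAct_TS_c0 : mAct K (ιm K (TSmat K).1) (c0 K) = cInf K :=
  mAct_mk_of_mulVec_eq_smul (isUnit_ιm (isUnit_coe_specialLinearGroup _)) _ _ (-1) <| by
    ext i; fin_cases i <;> simp [ιm, TSmat]

lemma mAct_TS_cInf : mAct K (ιm K (TSmat K).1) (cInf K) = c1 K :=
  mAct_mk_of_mulVec_eq_smul (isUnit_ιm (isUnit_coe_specialLinearGroup _)) _ _ 1 <| by
    ext i; fin_cases i <;> simp [ιm, TSmat]

lemma mAct_TS_c1 : mAct K (ιm K (TSmat K).1) (c1 K) = c0 K :=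
  mAct_mk_of_mulVec_eq_smul (isUnit_ιm (isUnit_coe_specialLinearGroup _)) _ _ 1 <| by
    ext i; fin_cases i <;> simp [ιm, TSmat]

lemma mAct_TS_sq_c0 : mAct K (ιm K (TSmat K ^ 2).1) (c0 K) = c1 K := by
  rw [pow_two, Matrix.SpecialLinearGroup.coe_mul, mAct_ιm_mul (isUnit_coe_specialLinearGroup _)
    (isUnit_coe_specialLinearGroup _), mAct_TS_c0, mAct_TS_cInf]

lemma mAct_TS_sq_cInf : mAct K (ιm K (TSmat K ^ 2).1) (cInf K) = c0 K := by
  rw [pow_two, Matrix.SpecialLinearGroup.coe_mul, mAct_ιm_mul (isUnit_coe_specialLinearGroup _)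
    (isUnit_coe_specialLinearGroup _), mAct_TS_cInf, mAct_TS_c1]

lemma mAct_J_c0 (e : (𝓞 K)ˣ) : mAct K (ιm K (Jmat K e)) (c0 K) = c0 K :=
  mAct_mk_of_mulVec_eq_smul
    (isUnit_ιm (IsUnit.of_mul_eq_one _ (Jmat_mul_Jmat_inv e))) _ _ 1 <| by
    ext i; fin_cases i <;> simp [ιm, Jmat]

lemma mAct_J_cInf (e : (𝓞 K)ˣ) : mAct K (ιm K (Jmat K e)) (cInf K) = cInf K :=
  mAct_mk_of_mulVec_eq_smul
    (isUnit_ιm (IsUnit.of_mul_eq_one _ (Jmat_mul_Jmat_inv e))) _ _ (e : K) <| by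
    ext i; fin_cases i <;> simp [ιm, Jmat]

end Cusps

section ModularSymbols

variable {K : Type} [Field K] {R : Type} [CommRing R] [Algebra (𝓞 K) R] {k : ℕ}
  {Γ : Subgroup (SL(2, 𝓞 K))}

lemma msym_self (α : P1 K) (P : Poly R k) : msym K R k Γ α α P = 0 :=
  (Submodule.Quotient.mk_eq_zero _).2 (Submodule.subset_span (Or.inl (Or.inl ⟨α, P, rfl⟩)))

lemma msym_add_msym_add_msym (α β γ : P1 K) (P : Poly R k) :
    msym K R k Γ α β P + msym K R k Γ β γ P + msym K R k Γ γ α P = 0 :=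
  (Submodule.Quotient.mk_eq_zero _).2
    (Submodule.subset_span (Or.inl (Or.inr ⟨α, β, γ, P, rfl⟩)))

lemma msym_swap (α β : P1 K) (P : Poly R k) :
    msym K R k Γ β α P = -msym K R k Γ α β P := by
  have h := msym_add_msym_add_msym (Γ := Γ) α β α P
  rw [msym_self, add_zero] at h
  exact eq_neg_of_add_eq_zero_right h

variable [NumberField K]

lemma maninSymM_mul_of_mul_eq_one {g h h' : Mat2 (𝓞 K)} (hg : IsUnit g) (hh : h * h' = 1)
    (P : Poly R k) :
    maninSymM K R k Γ (polyAct K R k h' P) (g * h) =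
      msym K R k Γ (mAct K (ιm K g) (mAct K (ιm K h) (c0 K)))
        (mAct K (ιm K g) (mAct K (ιm K h) (cInf K))) (polyAct K R k g P) := by
  have hh_unit : IsUnit h := IsUnit.of_mul_eq_one _ hh
  rw [maninSymM, polyAct_polyAct, mul_assoc, hh, mul_one, mAct_ιm_mul hg hh_unit,
    mAct_ιm_mul hg hh_unit]

end ModularSymbols

theorem manin_symbol_relations_general
    (K : Type) [Field K] [NumberField K]
    (R : Type) [CommRing R] [Algebra (𝓞 K) R]
    (k : ℕ)
    (Γ : Subgroup (SL(2, 𝓞 K)))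
    (e : (𝓞 K)ˣ)
    (P : Poly R k) (g : SL(2, 𝓞 K)) :
    maninSymM K R k Γ P g.1
        + maninSymM K R k Γ (polyAct K R k ((Smat K)⁻¹).1 P) (g.1 * (Smat K).1) = 0
    ∧ maninSymM K R k Γ P g.1
        = maninSymM K R k Γ (polyAct K R k (Jmat K e⁻¹) P) (g.1 * Jmat K e)
    ∧ maninSymM K R k Γ P g.1
        + maninSymM K R k Γ (polyAct K R k ((TSmat K)⁻¹).1 P) (g.1 * (TSmat K).1)
        + maninSymM K R k Γ (polyAct K R k (((TSmat K)⁻¹ ^ 2)).1 P) (g.1 * ((TSmat K) ^ 2).1)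
        = 0 := by
  have hg := isUnit_coe_specialLinearGroup g
  refine ⟨?_, ?_, ?_⟩
  · rw [maninSymM_mul_of_mul_eq_one hg (specialLinearGroup_coe_mul_coe_eq_one (mul_inv_cancel _)),
      mAct_S_c0,
      mAct_S_cInf, msym_swap, maninSymM, add_neg_cancel]
  · rw [maninSymM_mul_of_mul_eq_one hg (Jmat_mul_Jmat_inv e), mAct_J_c0, mAct_J_cInf, maninSymM]
  · rw [maninSymM_mul_of_mul_eq_one hg (specialLinearGroup_coe_mul_coe_eq_one (mul_inv_cancel _)),
      maninSymM_mul_of_mul_eq_one hg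
        (specialLinearGroup_coe_mul_coe_eq_one (by rw [inv_pow, mul_inv_cancel])), mAct_TS_c0,
      mAct_TS_cInf, mAct_TS_sq_c0, mAct_TS_sq_cInf, maninSymM]
    exact msym_add_msym_add_msym _ _ _ _

/-- The Manin symbols satisfy the relations
`[P,g] + [P|_{S⁻¹}, gS] = 0`, `[P,g] = [P|_{J⁻¹}, gJ]` and
`[P,g] + [P|_{(TS)⁻¹}, g(TS)] + [P|_{(TS)⁻²}, g(TS)²] = 0` in `M_k(Γ)`, where
`S = (0 -1; 1 0)`, `TS = (1 -1; 1 0)` and `J = (ε 0; 0 1)` with `ε` the fundamental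
unit of `K` (a generator of the unit group `𝓞^×`). -/
theorem manin_symbol_relations
    (K : Type) [Field K] [NumberField K] (hK : IsEuclideanImagQuad K)
    (R : Type) [CommRing R] [Algebra (𝓞 K) R]
    (k : ℕ) (hk : 2 ≤ k)
    (Γ : Subgroup (SL(2, 𝓞 K))) (hΓ : Γ.FiniteIndex)
    (hodd : Odd k → ∀ γ : SL(2, 𝓞 K), γ ∈ Γ → γ.1 ≠ -1)
    (e : (𝓞 K)ˣ) (he : ∀ u : (𝓞 K)ˣ, u ∈ Subgroup.zpowers e)
    (P : Poly R k) (g : SL(2, 𝓞 K)) :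
    maninSymM K R k Γ P g.1
        + maninSymM K R k Γ (polyAct K R k ((Smat K)⁻¹).1 P) (g.1 * (Smat K).1) = 0
    ∧ maninSymM K R k Γ P g.1
        = maninSymM K R k Γ (polyAct K R k (Jmat K e⁻¹) P) (g.1 * Jmat K e)
    ∧ maninSymM K R k Γ P g.1
        + maninSymM K R k Γ (polyAct K R k ((TSmat K)⁻¹).1 P) (g.1 * (TSmat K).1)
        + maninSymM K R k Γ (polyAct K R k (((TSmat K)⁻¹ ^ 2)).1 P) (g.1 * ((TSmat K) ^ 2).1)
        = 0 :=
  manin_symbol_relations_general K R k Γ e P g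

end Bianchi
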